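/- arXiv:2605.24627 — 2 statements merged into one kernel-verified Lean document; each statement's English description precedes it below -/
import Mathlib

section
/- (Localization) There exist constants C > 0 and ε₀ > 0 such that for all 0 < ε < ε₀: if points x = x(θ,δ,w) and y = x(θ+π+ψ,δ',w') in the ellipsoid (with w² ≤ δ, (w')² ≤ δ', ψ ∈ [−π,π]) satisfy 2 − ‖x−y‖ ≤ ε, then δ + δ' ≤ Cε, ψ² ≤ Cε, and w² + (w')² ≤ Cε. -/
/-!
Put `p = √(1-δ)`, `q = √(1-δ')`. The squared distance of the two points is
`p² + q² + 2pq cos ψ + a²(w - w')²`; bounding `2pq ≤ p² + q² = 2 - (δ + δ')` and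
`(w - w')² ≤ 2(w² + w'²) ≤ 2(δ + δ')` shows that the deficit `4 - ‖x - y‖²` dominates
`2(1 - a²)(δ + δ') + 2pq(1 - cos ψ)`, which is at most `4ε` when `‖x - y‖ ≥ 2 - ε`. This
controls `δ + δ'`, hence `w² + w'²`; once `δ + δ' ≤ 1/2` we have `pq ≥ 1/2`, which controls
`1 - cos ψ`, and `1 - cos ψ ≥ 2ψ²/π²` on `[-π, π]` controls `ψ²`.
-/

open Real

noncomputable def pt (a θ δ w : ℝ) : EuclideanSpace ℝ (Fin 3) :=
  (WithLp.equiv 2 (Fin 3 → ℝ)).symm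
    ![Real.sqrt (1-δ) * Real.cos θ, Real.sqrt (1-δ) * Real.sin θ, a*w]

lemma norm_pt_sub_pt_sq (a θ θ' δ δ' w w' : ℝ) (hδ : δ ≤ 1) (hδ' : δ' ≤ 1) :
    ‖pt a θ δ w - pt a θ' δ' w'‖ ^ 2 =
      (1 - δ) + (1 - δ') - 2 * (√(1 - δ) * √(1 - δ')) * cos (θ - θ') + a ^ 2 * (w - w') ^ 2 := by
  rw [EuclideanSpace.norm_sq_eq, Fin.sum_univ_three]
  simp only [pt, WithLp.equiv_symm_apply, PiLp.sub_apply, Real.norm_eq_abs,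
    sq_abs, Matrix.cons_val_zero, Matrix.cons_val_one, Matrix.cons_val_two, Matrix.head_cons,
    Matrix.tail_cons]
  have hp : √(1 - δ) ^ 2 = 1 - δ := sq_sqrt (by linarith)
  have hq : √(1 - δ') ^ 2 = 1 - δ' := sq_sqrt (by linarith)
  rw [cos_sub]
  nlinarith [sin_sq_add_cos_sq θ, sin_sq_add_cos_sq θ']

lemma norm_pt_sub_pt_add_pi_sq_add_le (a θ ψ δ δ' w w' : ℝ) (hδ : δ ≤ 1) (hδ' : δ' ≤ 1)
    (hw : w ^ 2 ≤ δ) (hw' : w' ^ 2 ≤ δ') :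
    ‖pt a θ δ w - pt a (θ + π + ψ) δ' w'‖ ^ 2 + 2 * (1 - a ^ 2) * (δ + δ')
      + 2 * (√(1 - δ) * √(1 - δ')) * (1 - cos ψ) ≤ 4 := by
  have hcos : cos (θ - (θ + π + ψ)) = -cos ψ := by
    rw [show θ - (θ + π + ψ) = -(ψ + π) by ring, cos_neg, cos_add_pi]
  rw [norm_pt_sub_pt_sq a θ _ δ δ' w w' hδ hδ', hcos]
  have hp : √(1 - δ) ^ 2 = 1 - δ := sq_sqrt (by linarith)
  have hq : √(1 - δ') ^ 2 = 1 - δ' := sq_sqrt (by linarith)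
  have hww : a ^ 2 * (w - w') ^ 2 ≤ 2 * a ^ 2 * (δ + δ') := by
    nlinarith [mul_nonneg (sq_nonneg a) (sq_nonneg (w + w'))]
  nlinarith [sq_nonneg (√(1 - δ) - √(1 - δ'))]

lemma deficit_le_of_two_sub_norm_le (a θ ψ δ δ' w w' ε : ℝ) (hδ : δ ≤ 1) (hδ' : δ' ≤ 1)
    (hw : w ^ 2 ≤ δ) (hw' : w' ^ 2 ≤ δ') (hε : ε ≤ 2)
    (hnear : 2 - ‖pt a θ δ w - pt a (θ + π + ψ) δ' w'‖ ≤ ε) :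
    (1 - a ^ 2) * (δ + δ') + √(1 - δ) * √(1 - δ') * (1 - cos ψ) ≤ 2 * ε := by
  have hsq : (2 - ε) ^ 2 ≤ ‖pt a θ δ w - pt a (θ + π + ψ) δ' w'‖ ^ 2 :=
    pow_le_pow_left₀ (by linarith) (by linarith) 2
  linarith [norm_pt_sub_pt_add_pi_sq_add_le a θ ψ δ δ' w w' hδ hδ' hw hw', sq_nonneg ε]

lemma half_le_sqrt_one_sub_mul_sqrt_one_sub {δ δ' : ℝ} (hδ : 0 ≤ δ) (hδ' : 0 ≤ δ')
    (hs : δ + δ' ≤ 1 / 2) : 1 / 2 ≤ √(1 - δ) * √(1 - δ') := by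
  rw [← sqrt_mul (by linarith)]
  exact le_sqrt_of_sq_le (by nlinarith [mul_nonneg hδ hδ'])

lemma sq_le_mul_one_sub_cos {ψ : ℝ} (hψ : |ψ| ≤ π) : ψ ^ 2 ≤ π ^ 2 / 2 * (1 - cos ψ) := by
  have h := cos_le_one_sub_mul_cos_sq hψ
  have hπ : 0 < π ^ 2 := by positivity
  calc ψ ^ 2 = π ^ 2 / 2 * (2 / π ^ 2 * ψ ^ 2) := by field_simp
    _ ≤ π ^ 2 / 2 * (1 - cos ψ) := by gcongr; linarith

theorem stmt8 (a : ℝ) (ha : 0 < a) (ha1 : a < 1) :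
    ∃ C > (0:ℝ), ∃ ε₀ > (0:ℝ), ∀ ε : ℝ, 0 < ε → ε < ε₀ →
      ∀ θ ψ δ δ' w w' : ℝ, δ ∈ Set.Icc (0:ℝ) 1 → δ' ∈ Set.Icc (0:ℝ) 1 →
      w ^ 2 ≤ δ → w' ^ 2 ≤ δ' → ψ ∈ Set.Icc (-π) π →
      2 - ‖pt a θ δ w - pt a (θ + π + ψ) δ' w'‖ ≤ ε →
      δ + δ' ≤ C * ε ∧ ψ ^ 2 ≤ C * ε ∧ w ^ 2 + w' ^ 2 ≤ C * ε := by
  have ha2 : 0 < 1 - a ^ 2 := by nlinarith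
  refine ⟨2 / (1 - a ^ 2) + 2 * π ^ 2, by positivity, (1 - a ^ 2) / 4, by positivity,
    fun ε hε hε₀ θ ψ δ δ' w w' ⟨hδ0, hδ1⟩ ⟨hδ'0, hδ'1⟩ hw hw' ⟨hψl, hψr⟩ hnear => ?_⟩
  have hdef := deficit_le_of_two_sub_norm_le a θ ψ δ δ' w w' ε hδ1 hδ'1 hw hw' (by nlinarith) hnear
  have hcos0 : 0 ≤ 1 - cos ψ := sub_nonneg.2 (cos_le_one ψ)
  have hs : δ + δ' ≤ 2 / (1 - a ^ 2) * ε := by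
    rw [div_mul_eq_mul_div, le_div_iff₀ ha2]
    nlinarith [mul_nonneg (mul_nonneg (sqrt_nonneg (1 - δ)) (sqrt_nonneg (1 - δ'))) hcos0]
  have hs_half : δ + δ' ≤ 1 / 2 := by
    have : 2 / (1 - a ^ 2) * ε ≤ 2 / (1 - a ^ 2) * ((1 - a ^ 2) / 4) := by gcongr
    rw [show 2 / (1 - a ^ 2) * ((1 - a ^ 2) / 4) = 1 / 2 by field_simp; ring] at this
    linarith
  have hpq := half_le_sqrt_one_sub_mul_sqrt_one_sub hδ0 hδ'0 hs_half
  have hcos : 1 - cos ψ ≤ 4 * ε := by nlinarith [mul_le_mul_of_nonneg_right hpq hcos0]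
  have hψ : ψ ^ 2 ≤ 2 * π ^ 2 * ε := by
    have := sq_le_mul_one_sub_cos (abs_le.2 ⟨hψl, hψr⟩)
    nlinarith [sq_nonneg π]
  have hπε : 0 ≤ 2 * π ^ 2 * ε := by positivity
  have haε : 0 ≤ 2 / (1 - a ^ 2) * ε := by positivity
  refine ⟨?_, ?_, ?_⟩ <;> rw [add_mul] <;> linarith
end

section
/- Uniformly over points x in the ellipsoid E with radial defect δ(x) = 1 − (x₁² + x₂²) ≤ Cε, the conditional pair probability p_ε(x) = P(2 − ‖x − X₂‖ ≤ ε) satisfies p_ε(x) = O(ε²) as ε ↓ 0, where X₂ is uniform on E. -/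
open Real MeasureTheory

def Ell (a : ℝ) : Set (EuclideanSpace ℝ (Fin 3)) :=
  {x | x 0 ^ 2 + x 1 ^ 2 + x 2 ^ 2 / a ^ 2 ≤ 1}

noncomputable def unifE (a : ℝ) : Measure (EuclideanSpace ℝ (Fin 3)) :=
  (volume (Ell a))⁻¹ • volume.restrict (Ell a)

/-!
Since `E` lies in the unit ball, `‖x - y‖ ≥ 2 - ε` forces `⟪x, y⟫ ≤ -1 + 2ε`; as the horizontal
part `x_h = (x₁, x₂)` has `|x_h|² ≥ 1 - Cε`, such a `y ∈ E` is nearly antipodal to `x`. With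
`κ = (2 + C)ε`, the linear map `y ↦ (⟨x_h, y_h⟩, x_h × y_h, y₃)`, of determinant `|x_h|² ≥ 1/2`,
sends these `y` into the box `[-1, -1 + 2κ] × [-2√κ, 2√κ]²` of volume `O(ε²)`.
-/

open Metric Set

local notation "ℝ³" => EuclideanSpace ℝ (Fin 3)

theorem EuclideanSpace.norm_sq_eq_fin_three (x : ℝ³) :
    ‖x‖ ^ 2 = x 0 ^ 2 + x 1 ^ 2 + x 2 ^ 2 := by
  rw [EuclideanSpace.real_norm_sq_eq, Fin.sum_univ_three]

theorem EuclideanSpace.inner_eq_fin_three (x y : ℝ³) :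
    inner ℝ x y = x 0 * y 0 + x 1 * y 1 + x 2 * y 2 := by
  simp [PiLp.inner_apply, Fin.sum_univ_three, mul_comm]

theorem real_inner_le_of_two_sub_le_norm_sub {F : Type*} [NormedAddCommGroup F]
    [InnerProductSpace ℝ F] {x y : F} {ε : ℝ} (hx : ‖x‖ ≤ 1) (hy : ‖y‖ ≤ 1) (hε : ε ≤ 2)
    (h : 2 - ε ≤ ‖x - y‖) : inner ℝ x y ≤ -1 + 2 * ε := by
  have hsq : (2 - ε) ^ 2 ≤ ‖x - y‖ ^ 2 := pow_le_pow_left₀ (by linarith) h 2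
  rw [norm_sub_sq_real] at hsq
  nlinarith [pow_le_one₀ (n := 2) (norm_nonneg x) hx, pow_le_one₀ (n := 2) (norm_nonneg y) hy,
    sq_nonneg ε]

section Ellipsoid

variable {a : ℝ}

theorem measurableSet_Ell (a : ℝ) : MeasurableSet (Ell a) :=
  measurableSet_le (by fun_prop) measurable_const

theorem unifE_apply (a : ℝ) (s : Set ℝ³) :
    unifE a s = (volume (Ell a))⁻¹ * volume (s ∩ Ell a) := by
  rw [unifE, Measure.smul_apply, Measure.restrict_apply' (measurableSet_Ell a), smul_eq_mul]

theorem Ell_subset_closedBall (ha : 0 < a) (ha1 : a ≤ 1) : Ell a ⊆ closedBall 0 1 := by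
  intro x hx
  have hx2 : x 2 ^ 2 ≤ x 2 ^ 2 / a ^ 2 :=
    le_div_self (sq_nonneg _) (by positivity) (pow_le_one₀ ha.le ha1)
  have : ‖x‖ ^ 2 ≤ 1 := by
    rw [EuclideanSpace.norm_sq_eq_fin_three]; exact le_trans (by linarith) hx
  rw [mem_closedBall_zero_iff]
  exact (sq_le_one_iff₀ (norm_nonneg x)).1 this

theorem ball_subset_Ell (ha1 : a ≤ 1) : ball 0 a ⊆ Ell a := by
  intro y hy
  rw [mem_ball_zero_iff] at hy
  have ha : 0 < a := (norm_nonneg y).trans_lt hy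
  have hy2 : y 0 ^ 2 + y 1 ^ 2 + y 2 ^ 2 < a ^ 2 := by
    rw [← EuclideanSpace.norm_sq_eq_fin_three]
    exact pow_lt_pow_left₀ hy (norm_nonneg y) two_ne_zero
  have hy01 : y 0 ^ 2 + y 1 ^ 2 ≤ (y 0 ^ 2 + y 1 ^ 2) / a ^ 2 :=
    le_div_self (by positivity) (by positivity) (pow_le_one₀ ha.le ha1)
  calc y 0 ^ 2 + y 1 ^ 2 + y 2 ^ 2 / a ^ 2
      ≤ (y 0 ^ 2 + y 1 ^ 2 + y 2 ^ 2) / a ^ 2 := by rw [add_div _ (y 2 ^ 2)]; linarith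
    _ ≤ 1 := (div_le_one (by positivity)).2 hy2.le

theorem volume_Ell_pos (ha : 0 < a) (ha1 : a ≤ 1) : 0 < volume (Ell a) :=
  (measure_ball_pos volume 0 ha).trans_le (measure_mono (ball_subset_Ell ha1))

theorem volume_Ell_lt_top (ha : 0 < a) (ha1 : a ≤ 1) : volume (Ell a) < ⊤ :=
  (measure_mono (Ell_subset_closedBall ha ha1)).trans_lt measure_closedBall_lt_top

end Ellipsoid

theorem near_antipodal_coord_bounds {x₀ x₁ x₂ y₀ y₁ y₂ η δ : ℝ}
    (hx : x₀ ^ 2 + x₁ ^ 2 + x₂ ^ 2 ≤ 1) (hy : y₀ ^ 2 + y₁ ^ 2 + y₂ ^ 2 ≤ 1)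
    (hδ : 1 - (x₀ ^ 2 + x₁ ^ 2) ≤ δ) (hη : x₀ * y₀ + x₁ * y₁ + x₂ * y₂ ≤ -1 + η)
    (hκ : η + δ ≤ 1 / 2) :
    x₀ * y₀ + x₁ * y₁ ∈ Icc (-1) (-1 + 2 * (η + δ)) ∧
      (-x₁ * y₀ + x₀ * y₁) ^ 2 ≤ 4 * (η + δ) ∧ y₂ ^ 2 ≤ 4 * (η + δ) := by
  set κ := η + δ
  set P := x₀ * y₀ + x₁ * y₁
  set d := 1 - (y₀ ^ 2 + y₁ ^ 2)
  have hPQ : P ^ 2 + (-x₁ * y₀ + x₀ * y₁) ^ 2 = (x₀ ^ 2 + x₁ ^ 2) * (y₀ ^ 2 + y₁ ^ 2) := by ring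
  have hPsq : P ^ 2 ≤ 1 - d := by
    nlinarith [sq_nonneg (-x₁ * y₀ + x₀ * y₁), sq_nonneg x₂, sq_nonneg y₂, sq_nonneg y₀,
      sq_nonneg y₁, mul_nonneg (sq_nonneg x₂) (add_nonneg (sq_nonneg y₀) (sq_nonneg y₁))]
  -- AM-GM: `-x₂ y₂ ≤ x₂² + y₂² / 4 ≤ δ + d / 4`
  have hP : P ≤ -1 + κ + d / 4 := by nlinarith [sq_nonneg (x₂ + y₂ / 2)]
  have hd : d ≤ 4 * κ := by
    have h0 : 0 ≤ 1 - κ - d / 4 := by nlinarith [sq_nonneg y₀, sq_nonneg y₁, sq_nonneg y₂]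
    nlinarith [mul_self_le_mul_self h0 (show 1 - κ - d / 4 ≤ -P by linarith)]
  have hP1 : -1 ≤ P := by nlinarith [sq_nonneg y₂]
  have hP2 : P ≤ -1 + 2 * κ := by linarith
  refine ⟨⟨hP1, hP2⟩, ?_, by linarith⟩
  have h0 : 0 ≤ 1 - 2 * κ := by linarith
  nlinarith [mul_self_le_mul_self h0 (show 1 - 2 * κ ≤ -P by linarith),
    mul_nonneg (sq_nonneg x₂) (add_nonneg (sq_nonneg y₀) (sq_nonneg y₁)), sq_nonneg y₂]

noncomputable def rotScale (p q : ℝ) : ℝ³ →ₗ[ℝ] ℝ³ :=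
  Matrix.toLpLin 2 2 !![p, q, 0; -q, p, 0; 0, 0, 1]

theorem det_rotScale (p q : ℝ) : LinearMap.det (rotScale p q) = p ^ 2 + q ^ 2 := by
  rw [rotScale, LinearMap.det_toLpLin, Matrix.det_fin_three]
  simp; ring

theorem rotScale_apply (p q : ℝ) (y : ℝ³) :
    rotScale p q y 0 = p * y 0 + q * y 1 ∧ rotScale p q y 1 = -q * y 0 + p * y 1 ∧
      rotScale p q y 2 = y 2 := by
  simp [rotScale, Matrix.toLpLin_apply, dotProduct, Fin.sum_univ_three]

def coordBox {ι : Type*} (l u : ι → ℝ) : Set (EuclideanSpace ℝ ι) :=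
  {y | ∀ i, y i ∈ Icc (l i) (u i)}

theorem volume_coordBox {ι : Type*} [Fintype ι] (l u : ι → ℝ) :
    volume (coordBox l u) = ∏ i, ENNReal.ofReal (u i - l i) := by
  have : coordBox l u = WithLp.ofLp ⁻¹' Icc l u := by
    ext y; simp [coordBox, Pi.le_def, forall_and]
  rw [this, (PiLp.volume_preserving_ofLp ι).measure_preimage measurableSet_Icc.nullMeasurableSet,
    Real.volume_Icc_pi]

noncomputable def farBox (κ : ℝ) : Set ℝ³ :=
  coordBox ![-1, -√(4 * κ), -√(4 * κ)] ![-1 + 2 * κ, √(4 * κ), √(4 * κ)]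

theorem volume_farBox {κ : ℝ} (hκ : 0 ≤ κ) : volume (farBox κ) = ENNReal.ofReal (32 * κ ^ 2) := by
  rw [farBox, volume_coordBox, Fin.prod_univ_three]
  simp only [Matrix.cons_val_zero, Matrix.cons_val_one, Matrix.cons_val_two, Matrix.head_cons,
    Matrix.tail_cons]
  rw [show -1 + 2 * κ - -1 = 2 * κ by ring, show √(4 * κ) - -√(4 * κ) = 2 * √(4 * κ) by ring,
    ← ENNReal.ofReal_mul (by positivity), ← ENNReal.ofReal_mul (by positivity)]
  congr 1
  have := Real.mul_self_sqrt (show 0 ≤ 4 * κ by positivity)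
  linear_combination 8 * κ * this

section FarPoints

variable {x : ℝ³} {ε δ : ℝ}

theorem far_subset_preimage_farBox (hx : ‖x‖ ≤ 1) (hδ : 1 - (x 0 ^ 2 + x 1 ^ 2) ≤ δ)
    (hκ : 2 * ε + δ ≤ 1 / 2) :
    {y | 2 - ‖x - y‖ ≤ ε} ∩ closedBall 0 1 ⊆ rotScale (x 0) (x 1) ⁻¹' farBox (2 * ε + δ) := by
  rintro y ⟨hxy, hy⟩
  rw [mem_closedBall_zero_iff] at hy
  have hx' := EuclideanSpace.norm_sq_eq_fin_three x ▸ pow_le_one₀ (n := 2) (norm_nonneg x) hx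
  have hy' := EuclideanSpace.norm_sq_eq_fin_three y ▸ pow_le_one₀ (n := 2) (norm_nonneg y) hy
  have hinner := EuclideanSpace.inner_eq_fin_three x y ▸
    real_inner_le_of_two_sub_le_norm_sub hx hy (by nlinarith [sq_nonneg (x 2)]) (sub_le_comm.1 hxy)
  obtain ⟨hP, hQ, hy₂⟩ := near_antipodal_coord_bounds hx' hy' hδ hinner hκ
  obtain ⟨h₀, h₁, h₂⟩ := rotScale_apply (x 0) (x 1) y
  intro i
  fin_cases i
  · show rotScale (x 0) (x 1) y 0 ∈ Icc _ _
    exact h₀ ▸ hP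
  · show rotScale (x 0) (x 1) y 1 ∈ Icc _ _
    exact h₁ ▸ abs_le.1 (Real.abs_le_sqrt hQ)
  · show rotScale (x 0) (x 1) y 2 ∈ Icc _ _
    exact h₂ ▸ abs_le.1 (Real.abs_le_sqrt hy₂)

theorem volume_far_inter_closedBall_le (hx : ‖x‖ ≤ 1) (hε : 0 ≤ ε)
    (hδ : 1 - (x 0 ^ 2 + x 1 ^ 2) ≤ δ) (hκ : 2 * ε + δ ≤ 1 / 2) :
    volume ({y | 2 - ‖x - y‖ ≤ ε} ∩ closedBall 0 1) ≤ ENNReal.ofReal (64 * (2 * ε + δ) ^ 2) := by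
  have hx' := EuclideanSpace.norm_sq_eq_fin_three x ▸ pow_le_one₀ (n := 2) (norm_nonneg x) hx
  have hdet : 1 / 2 ≤ LinearMap.det (rotScale (x 0) (x 1)) := by
    rw [det_rotScale]; linarith
  have hdet_inv : |(LinearMap.det (rotScale (x 0) (x 1)))⁻¹| ≤ 2 := by
    rw [abs_of_pos (by positivity)]
    calc _ ≤ (1 / 2 : ℝ)⁻¹ := inv_anti₀ (by norm_num) hdet
      _ = 2 := by norm_num
  calc volume ({y | 2 - ‖x - y‖ ≤ ε} ∩ closedBall 0 1)
      ≤ volume (rotScale (x 0) (x 1) ⁻¹' farBox (2 * ε + δ)) :=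
        measure_mono (far_subset_preimage_farBox hx hδ hκ)
    _ = ENNReal.ofReal |(LinearMap.det (rotScale (x 0) (x 1)))⁻¹| * volume (farBox (2 * ε + δ)) :=
        Measure.addHaar_preimage_linearMap _ (by positivity) _
    _ ≤ ENNReal.ofReal 2 * ENNReal.ofReal (32 * (2 * ε + δ) ^ 2) := by
        rw [volume_farBox (by nlinarith [sq_nonneg (x 2)])]
        gcongr
    _ = ENNReal.ofReal (64 * (2 * ε + δ) ^ 2) := by
        rw [← ENNReal.ofReal_mul (by norm_num)]; ring_nf

end FarPoints

/-- Uniformly over `x ∈ E` with radial defect `1 - (x₁² + x₂²) ≤ Cε`, the pair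
probability `p_ε(x) = P(2 - ‖x - X₂‖ ≤ ε)` is `O(ε²)` as `ε ↓ 0`. -/
theorem stmt17 (a C : ℝ) (ha : 0 < a) (ha1 : a < 1) (hC : 0 < C) :
    ∃ K > (0:ℝ), ∃ ε₀ > (0:ℝ), ∀ ε : ℝ, 0 < ε → ε < ε₀ →
      ∀ x ∈ Ell a, 1 - (x 0 ^ 2 + x 1 ^ 2) ≤ C * ε →
        unifE a {y | 2 - ‖x - y‖ ≤ ε} ≤ ENNReal.ofReal (K * ε ^ 2) := by
  have hV := ENNReal.toReal_pos (volume_Ell_pos ha ha1.le).ne' (volume_Ell_lt_top ha ha1.le).ne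
  refine ⟨(volume (Ell a)).toReal⁻¹ * (64 * (2 + C) ^ 2), by positivity,
    1 / (2 * (2 + C)), by positivity, fun ε hε hεlt x hx hxδ => ?_⟩
  have hκ : 2 * ε + C * ε ≤ 1 / 2 := by
    rw [lt_div_iff₀ (by positivity)] at hεlt; linarith
  have hx' : ‖x‖ ≤ 1 := mem_closedBall_zero_iff.1 (Ell_subset_closedBall ha ha1.le hx)
  calc unifE a {y | 2 - ‖x - y‖ ≤ ε}
      = (volume (Ell a))⁻¹ * volume ({y | 2 - ‖x - y‖ ≤ ε} ∩ Ell a) := unifE_apply a _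
    _ ≤ (volume (Ell a))⁻¹ * volume ({y | 2 - ‖x - y‖ ≤ ε} ∩ closedBall 0 1) := by
        gcongr; exact Ell_subset_closedBall ha ha1.le
    _ ≤ (volume (Ell a))⁻¹ * ENNReal.ofReal (64 * (2 * ε + C * ε) ^ 2) := by
        gcongr; exact volume_far_inter_closedBall_le hx' hε.le hxδ hκ
    _ = ENNReal.ofReal ((volume (Ell a)).toReal⁻¹ * (64 * (2 + C) ^ 2) * ε ^ 2) := by
        rw [← ENNReal.ofReal_toReal (ENNReal.inv_ne_top.2 (volume_Ell_pos ha ha1.le).ne'),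
          ← ENNReal.ofReal_mul (by positivity), ENNReal.toReal_inv]
        ring_nf
end
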